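/- Let I ⊆ ℝ^k be a finite set of ideal points and let B(c,r) be a yolk of I. Then for every vector α ∈ ℝ^k there exists a unit vector a ∈ ℝ^k such that (a, ⟪a,c⟫ + r) is a median hyperplane of I (hence a hyperplane tangent to B(c,r)) and ⟪a,α⟫ ≥ 0. -/

import Mathlib

/-! If every median hyperplane touching the yolk `B(c, r)` from above (`b = ⟪a, c⟫ + r`) had
`⟪a, α⟫ < 0`, then by the symmetry `(a, b) ↦ (-a, -b)` every one touching it from below would have
`⟪a, α⟫ > 0`. Moving the centre to `c - ε α` then pulls every tangent median hyperplane strictly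
inside the ball; as the set of median hyperplanes is compact, this happens uniformly, so some ball
of radius `< r` meets every median hyperplane, contradicting the minimality of the yolk. -/

open scoped RealInnerProductSpace
open Real

noncomputable section

/-- Points of Euclidean space `ℝ^k`. -/
abbrev Pt (k : ℕ) := EuclideanSpace ℝ (Fin k)

/-- `(a, b)` (with `‖a‖ = 1`) is a median hyperplane for the finite set of ideal points `I`:
at least `|I|/2` points are on each closed side. -/
def IsMedianHyperplane {k : ℕ} (I : Finset (Pt k)) (a : Pt k) (b : ℝ) : Prop :=
  ‖a‖ = 1 ∧
    (I.card : ℝ) / 2 ≤ ((I.filter fun x => ⟪a, x⟫ ≤ b).card : ℝ) ∧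
    (I.card : ℝ) / 2 ≤ ((I.filter fun x => b ≤ ⟪a, x⟫).card : ℝ)

/-- A limiting median hyperplane for `I ⊆ ℝ^k` is a median hyperplane containing at least
`k` points of `I`. -/
def IsLimitingMedianHyperplane {k : ℕ} (I : Finset (Pt k)) (a : Pt k) (b : ℝ) : Prop :=
  IsMedianHyperplane I a b ∧ k ≤ (I.filter fun x => ⟪a, x⟫ = b).card

/-- The yolk radius: infimum of `r ≥ 0` such that some closed ball `B(c,r)` intersects
every median hyperplane of `I` (the ball `B(c,r)` meets `H(a,b)` iff `|⟪a,c⟫ - b| ≤ r`). -/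
def yolkRadius {k : ℕ} (I : Finset (Pt k)) : ℝ :=
  sInf {r : ℝ | 0 ≤ r ∧ ∃ c : Pt k, ∀ a b, IsMedianHyperplane I a b → |⟪a, c⟫ - b| ≤ r}

/-- The LP yolk radius: infimum of `r ≥ 0` such that some closed ball `B(c,r)` intersects
every limiting median hyperplane of `I`. -/
def lpYolkRadius {k : ℕ} (I : Finset (Pt k)) : ℝ :=
  sInf {r : ℝ | 0 ≤ r ∧ ∃ c : Pt k, ∀ a b, IsLimitingMedianHyperplane I a b → |⟪a, c⟫ - b| ≤ r}

/-- `B(c,r)` is a yolk of `I`: it intersects every median hyperplane, and every closed ball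
intersecting every median hyperplane has radius at least `r`. -/
def IsYolk {k : ℕ} (I : Finset (Pt k)) (c : Pt k) (r : ℝ) : Prop :=
  (∀ a b, IsMedianHyperplane I a b → |⟪a, c⟫ - b| ≤ r) ∧
  ∀ (c' : Pt k) (r' : ℝ),
    (∀ a b, IsMedianHyperplane I a b → |⟪a, c'⟫ - b| ≤ r') → r ≤ r'

/-- `B(c,r)` is an LP yolk of `I`: it intersects every limiting median hyperplane, and every
closed ball intersecting every limiting median hyperplane has radius at least `r`. -/
def IsLPYolk {k : ℕ} (I : Finset (Pt k)) (c : Pt k) (r : ℝ) : Prop :=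
  (∀ a b, IsLimitingMedianHyperplane I a b → |⟪a, c⟫ - b| ≤ r) ∧
  ∀ (c' : Pt k) (r' : ℝ),
    (∀ a b, IsLimitingMedianHyperplane I a b → |⟪a, c'⟫ - b| ≤ r') → r ≤ r'

/-- In `(f - ε g)² = f² - 2ε f g + ε² g²`, either `f²` is at least `η` below `r²` and the
perturbation is too small to matter, or `f g ≥ η` and the cross term gains `2εη`. -/
lemma sq_sub_mul_le_of_le_max {f g r G η ε : ℝ} (hf : |f| ≤ r) (hg : |g| ≤ G)
    (hη : 0 < η) (hfg : η ≤ max (r ^ 2 - f ^ 2) (f * g)) (hε : 0 ≤ ε)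
    (hεη : ε * (2 * r * G + G ^ 2 + η) ≤ η) :
    (f - ε * g) ^ 2 ≤ r ^ 2 - ε * η := by
  have hG : 0 ≤ G := (abs_nonneg g).trans hg
  have hr : 0 ≤ r := (abs_nonneg f).trans hf
  have hf2 : f ^ 2 ≤ r ^ 2 := sq_le_sq' (abs_le.mp hf).1 (abs_le.mp hf).2
  have hg2 : g ^ 2 ≤ G ^ 2 := sq_le_sq' (abs_le.mp hg).1 (abs_le.mp hg).2
  have hfg_ge : -(r * G) ≤ f * g := by
    have : |f * g| ≤ r * G := abs_mul f g ▸ mul_le_mul hf hg (abs_nonneg _) hr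
    linarith [neg_abs_le (f * g)]
  have hε1 : ε ≤ 1 := by
    refine le_of_mul_le_mul_right (?_ : ε * η ≤ 1 * η) hη
    nlinarith [mul_nonneg hε (mul_nonneg hr hG), mul_nonneg hε (sq_nonneg G)]
  have hεg : ε * g ^ 2 ≤ ε * G ^ 2 := mul_le_mul_of_nonneg_left hg2 hε
  rcases le_max_iff.mp hfg with h | h
  · nlinarith [mul_le_mul_of_nonneg_left hfg_ge hε,
      mul_le_mul_of_nonneg_right hε1 (mul_nonneg hε (sq_nonneg g))]
  · have hεG : ε * G ^ 2 ≤ η := by nlinarith [mul_nonneg hε (mul_nonneg hr hG)]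
    nlinarith [mul_le_mul_of_nonneg_left h hε, mul_le_mul_of_nonneg_left hεg hε,
      mul_le_mul_of_nonneg_left hεG hε]

theorem IsCompact.exists_abs_sub_mul_le {X : Type*} [TopologicalSpace X] {K : Set X}
    (hK : IsCompact K) {f g : X → ℝ} (hf : ContinuousOn f K) (hg : ContinuousOn g K) {r : ℝ}
    (hfr : ∀ p ∈ K, |f p| ≤ r) (hpos : ∀ p ∈ K, f p = r → 0 < g p)
    (hneg : ∀ p ∈ K, f p = -r → g p < 0) :
    ∃ ε > 0, ∃ s < r, ∀ p ∈ K, |f p - ε * g p| ≤ s := by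
  rcases K.eq_empty_or_nonempty with rfl | ⟨p₀, hp₀⟩
  · exact ⟨1, one_pos, r - 1, by linarith, by simp⟩
  have hr : 0 ≤ r := (abs_nonneg _).trans (hfr p₀ hp₀)
  have hmax : ∀ p ∈ K, 0 < max (r ^ 2 - f p ^ 2) (f p * g p) := by
    intro p hp
    rcases (hfr p hp).lt_or_eq with hlt | heq
    · exact lt_max_of_lt_left (by nlinarith [abs_nonneg (f p), sq_abs (f p)])
    refine lt_max_of_lt_right ?_
    rcases hr.eq_or_lt with rfl | hr0
    · have h0 : f p = 0 := abs_eq_zero.mp heq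
      exact absurd (hpos p hp h0) (hneg p hp (by simpa using h0)).not_gt
    rcases (abs_eq hr).mp heq with h | h
    · rw [h]; exact mul_pos hr0 (hpos p hp h)
    · rw [h]; exact mul_pos_of_neg_of_neg (by linarith) (hneg p hp h)
  obtain ⟨η, hη, hηle⟩ := hK.exists_forall_le'
    ((continuousOn_const.sub (hf.pow 2)).sup (hf.mul hg)) hmax
  obtain ⟨G, hG⟩ := hK.exists_bound_of_continuousOn hg
  have hG0 : 0 ≤ G := (norm_nonneg _).trans (hG p₀ hp₀)
  set ε := η / (2 * r * G + G ^ 2 + η)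
  have hε : 0 < ε := by positivity
  have hεη : ε * (2 * r * G + G ^ 2 + η) ≤ η := (div_mul_cancel₀ η (by positivity)).le
  have hsq : ∀ p ∈ K, (f p - ε * g p) ^ 2 ≤ r ^ 2 - ε * η := fun p hp =>
    sq_sub_mul_le_of_le_max (hfr p hp) (hG p hp) hη (hηle p hp) hε.le hεη
  have hr_pos : 0 < r := by nlinarith [hsq p₀ hp₀, sq_nonneg (f p₀ - ε * g p₀), mul_pos hε hη]
  refine ⟨ε, hε, √(r ^ 2 - ε * η), (Real.sqrt_lt' hr_pos).mpr (by nlinarith [mul_pos hε hη]),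
    fun p hp => Real.abs_le_sqrt (hsq p hp)⟩

theorem isClosed_setOf_le_card_filter {X ι : Type*} [TopologicalSpace X] (I : Finset ι)
    (P : X → ι → Prop) [∀ p, DecidablePred (P p)] (hP : ∀ x ∈ I, IsClosed {p | P p x})
    (m : ℝ) : IsClosed {p | m ≤ ((I.filter (P p)).card : ℝ)} := by
  have hunion : {p | m ≤ ((I.filter (P p)).card : ℝ)} =
      ⋃ S ∈ {S : Finset ι | S ⊆ I ∧ m ≤ (S.card : ℝ)}, ⋂ x ∈ S, {p | P p x} := by
    ext p
    simp only [Set.mem_ofPred_eq, Set.mem_iUnion, Set.mem_iInter, exists_prop]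
    constructor
    · exact fun h => ⟨I.filter (P p), ⟨Finset.filter_subset _ _, h⟩,
        fun x hx => (Finset.mem_filter.mp hx).2⟩
    · rintro ⟨S, ⟨hSI, hm⟩, hS⟩
      exact hm.trans <| by
        exact_mod_cast Finset.card_le_card fun x hx => Finset.mem_filter.mpr ⟨hSI hx, hS x hx⟩
  rw [hunion]
  refine Set.Finite.isClosed_biUnion ?_ fun S hS => isClosed_biInter fun x hx => hP x (hS.1 hx)
  exact I.powerset.finite_toSet.subset fun S hS => Finset.mem_powerset.mpr hS.1

theorem isClosed_setOf_isMedianHyperplane {k : ℕ} (I : Finset (Pt k)) :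
    IsClosed {p : Pt k × ℝ | IsMedianHyperplane I p.1 p.2} := by
  refine (isClosed_eq continuous_fst.norm continuous_const).inter
    ((isClosed_setOf_le_card_filter I _ (fun x _ => ?_) _).inter
      (isClosed_setOf_le_card_filter I _ (fun x _ => ?_) _))
  · exact isClosed_le (continuous_fst.inner continuous_const) continuous_snd
  · exact isClosed_le continuous_snd (continuous_fst.inner continuous_const)

theorem isCompact_setOf_isMedianHyperplane {k : ℕ} {I : Finset (Pt k)} {c : Pt k} {r : ℝ}
    (h : ∀ a b, IsMedianHyperplane I a b → |⟪a, c⟫ - b| ≤ r) :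
    IsCompact {p : Pt k × ℝ | IsMedianHyperplane I p.1 p.2} := by
  refine Metric.isCompact_of_isClosed_isBounded (isClosed_setOf_isMedianHyperplane I)
    ((Metric.isBounded_closedBall (x := (0 : Pt k)) (r := 1)).prod
      (Metric.isBounded_closedBall (x := (0 : ℝ)) (r := ‖c‖ + r)) |>.subset ?_)
  rintro ⟨a, b⟩ hab
  have hac : |⟪a, c⟫| ≤ ‖c‖ := by simpa [hab.1] using abs_real_inner_le_norm a c
  refine ⟨by simp [hab.1], ?_⟩
  simp only [Metric.mem_closedBall, dist_zero_right, Real.norm_eq_abs]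
  linarith [abs_sub_abs_le_abs_sub b ⟪a, c⟫, abs_sub_comm b ⟪a, c⟫, h a b hab]

theorem IsMedianHyperplane.neg {k : ℕ} {I : Finset (Pt k)} {a : Pt k} {b : ℝ}
    (h : IsMedianHyperplane I a b) : IsMedianHyperplane I (-a) (-b) := by
  obtain ⟨ha, hle, hge⟩ := h
  simp only [IsMedianHyperplane, norm_neg, inner_neg_left, neg_le_neg_iff]
  exact ⟨ha, hge, hle⟩

/-- If `B(c,r)` is a yolk of a finite `I ⊆ ℝ^k`, then for every `α ∈ ℝ^k`
there is a unit vector `a` with `(a, ⟪a,c⟫ + r)` a median hyperplane of `I` (hence tangent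
to `B(c,r)`) and `⟪a, α⟫ ≥ 0`. -/
theorem tangent_median_hyperplane_every_hemisphere {k : ℕ} (I : Finset (Pt k))
    (c : Pt k) (r : ℝ) (hyolk : IsYolk I c r) (α : Pt k) :
    ∃ a : Pt k, ‖a‖ = 1 ∧ IsMedianHyperplane I a (⟪a, c⟫ + r) ∧ 0 ≤ ⟪a, α⟫ := by
  by_contra! hcon
  have hneg : ∀ p : Pt k × ℝ, IsMedianHyperplane I p.1 p.2 → ⟪p.1, c⟫ - p.2 = -r →
      ⟪p.1, α⟫ < 0 := fun p hp hf =>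
    hcon p.1 hp.1 (by rwa [show ⟪p.1, c⟫ + r = p.2 by linarith])
  have hpos : ∀ p : Pt k × ℝ, IsMedianHyperplane I p.1 p.2 → ⟪p.1, c⟫ - p.2 = r →
      0 < ⟪p.1, α⟫ := fun p hp hf => by
    have hf' : ⟪(-p).1, c⟫ - (-p).2 = -r := by
      simp only [Prod.fst_neg, Prod.snd_neg, inner_neg_left]; linarith
    simpa [inner_neg_left] using hneg (-p) hp.neg hf'
  obtain ⟨ε, hε, s, hsr, hs⟩ := (isCompact_setOf_isMedianHyperplane hyolk.1).exists_abs_sub_mul_le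
    (by fun_prop : Continuous fun p : Pt k × ℝ => ⟪p.1, c⟫ - p.2).continuousOn
    (by fun_prop : Continuous fun p : Pt k × ℝ => ⟪p.1, α⟫).continuousOn
    (fun p hp => hyolk.1 p.1 p.2 hp) hpos hneg
  refine hsr.not_ge (hyolk.2 (c - ε • α) s fun a b hab => ?_)
  simpa [inner_sub_right, real_inner_smul_right, sub_right_comm] using hs (a, b) hab
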